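/- Let n ≥ 1 and let {S_t}_{t>0} and {T_t}_{t>0} be two families of bounded linear operators on L²(ℝⁿ, ℂ), each satisfying L² off-diagonal (Gaffney) estimates with exponent β > 0 and constants c, C > 0: for all closed sets E, F ⊆ ℝⁿ, all t > 0, and all f ∈ L²(ℝⁿ) supported in E, ( ∫_F |S_t f|² )^{1/2} ≤ C exp( −( dist(E,F)² / (c t) )^β ) ( ∫_E |f|² )^{1/2}, and the same for T_t. Then there exist constants c', C' > 0, depending only on the given constants, such that for all closed sets E, F ⊆ ℝⁿ, all s, t > 0, and all f ∈ L²(ℝⁿ) supported in E, ( ∫_F |S_s (T_t f)|² )^{1/2} ≤ C' exp( −( dist(E,F)² / (c' max{s,t}) )^β ) ( ∫_E |f|² )^{1/2}. -/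

import Mathlib

/-!
Let `d = dist(E, F)` and `δ = d / 2`. Split `T_t f = 𝟙_G T_t f + 𝟙_{Gᶜ} T_t f` along the closed
`δ`-neighbourhood `G` of `E`. The first piece is supported in `G`, which lies at distance `≥ δ`
from `F`, so the estimate for `S_s` gives decay while the estimate for `T_t` (with `F = ℝⁿ`) only
bounds its size. The second piece lives where `dist(·, E) ≥ δ`, so now the estimate for `T_t`
gives decay and that for `S_s` (with `E = ℝⁿ`) bounds the size. Both decay factors are at most
`exp(-(d² / (4c max{s,t}))^β)`.
-/

open MeasureTheory Set
open scoped ENNReal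

noncomputable section

/-- The (possibly infinite) distance between two subsets of a pseudo-emetric space,
returned as a real number. -/
def setDist {X : Type*} [PseudoEMetricSpace X] (A B : Set X) : ℝ :=
  (⨅ a ∈ A, EMetric.infEdist a B).toReal

/-- The `L²` norm of (the restriction to `F` of) an `L²` function. -/
def l2NormOn (n : ℕ) (F : Set (EuclideanSpace ℝ (Fin n)))
    (f : Lp ℂ 2 (volume : Measure (EuclideanSpace ℝ (Fin n)))) : ℝ≥0∞ :=
  (∫⁻ x in F, (‖f x‖₊ : ℝ≥0∞) ^ 2) ^ (1 / 2 : ℝ)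

/-- A family `{S_t}_{t>0}` of bounded operators on `L²(ℝⁿ)` satisfies `L²` off-diagonal
("Gaffney") estimates with exponent `β` and constants `c, C`: for all closed sets `E, F`,
all `t > 0` and all `f ∈ L²` supported in `E`,
`‖S_t f‖_{L²(F)} ≤ C exp(−(dist(E,F)²/(ct))^β) ‖f‖_{L²(E)}`. -/
def Gaffney (n : ℕ)
    (S : ℝ → Lp ℂ 2 (volume : Measure (EuclideanSpace ℝ (Fin n))) →L[ℂ]
      Lp ℂ 2 (volume : Measure (EuclideanSpace ℝ (Fin n))))
    (β c C : ℝ) : Prop :=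
  ∀ E F : Set (EuclideanSpace ℝ (Fin n)), IsClosed E → IsClosed F →
    ∀ t : ℝ, 0 < t →
      ∀ f : Lp ℂ 2 (volume : Measure (EuclideanSpace ℝ (Fin n))),
        (∀ᵐ x, x ∉ E → f x = 0) →
        l2NormOn n F (S t f) ≤
          ENNReal.ofReal (C * Real.exp (-(setDist E F ^ 2 / (c * t)) ^ β)) *
            l2NormOn n E f

open Metric

local notation "L²(" n ")" => Lp ℂ 2 (volume : Measure (EuclideanSpace ℝ (Fin n)))

section SetDist

variable {X : Type*} [PseudoEMetricSpace X]

-- `setDist A B` is the junk value `0` whenever this infimum is `∞`, e.g. if `A` or `B` is empty.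
def setEdist (A B : Set X) : ℝ≥0∞ :=
  ⨅ a ∈ A, infEDist a B

theorem setDist_eq_toReal_setEdist (A B : Set X) : setDist A B = (setEdist A B).toReal :=
  rfl

theorem setDist_nonneg (A B : Set X) : 0 ≤ setDist A B :=
  ENNReal.toReal_nonneg

theorem setEdist_ne_top_of_setDist_pos {A B : Set X} (h : 0 < setDist A B) :
    setEdist A B ≠ ∞ :=
  (ENNReal.toReal_pos_iff.1 h).2.ne

theorem le_setDist_of_le_setEdist {A B : Set X} {ρ : ℝ} (h : ENNReal.ofReal ρ ≤ setEdist A B)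
    (hfin : setEdist A B ≠ ∞) : ρ ≤ setDist A B :=
  (ENNReal.ofReal_le_iff_le_toReal hfin).1 h

theorem setEdist_le_infEDist_add (E F : Set X) (x : X) :
    setEdist E F ≤ infEDist x F + infEDist x E := by
  rw [← tsub_le_iff_left, le_infEDist]
  intro a ha
  rw [tsub_le_iff_left, edist_comm]
  exact (iInf₂_le a ha).trans infEDist_le_infEDist_add_edist

theorem setEdist_le_infEDist_of_mem {E F : Set X} {b : X} (hb : b ∈ F) :
    setEdist E F ≤ infEDist b E := by
  simpa [infEDist_zero_of_mem hb] using setEdist_le_infEDist_add E F b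

theorem setDist_sub_le_setDist_cthickening (E F : Set X) {δ : ℝ} (hδ : 0 ≤ δ) :
    setDist E F - δ ≤ setDist (cthickening δ E) F := by
  rcases le_or_gt (setDist E F) δ with hle | hlt
  · exact (sub_nonpos.2 hle).trans (setDist_nonneg _ _)
  have hfin := setEdist_ne_top_of_setDist_pos (hδ.trans_lt hlt)
  refine le_setDist_of_le_setEdist (le_iInf₂ fun x hx => ?_)
    (ne_top_of_le_ne_top hfin (biInf_mono fun a ha => self_subset_cthickening E ha))
  rw [ENNReal.ofReal_sub _ hδ, tsub_le_iff_right, setDist_eq_toReal_setEdist,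
    ENNReal.ofReal_toReal hfin]
  exact (setEdist_le_infEDist_add E F x).trans (by gcongr; exact hx)

theorem le_setDist_compl_thickening {E F : Set X} {δ : ℝ} (hδ : δ ≤ setDist E F) :
    δ ≤ setDist E (thickening δ E)ᶜ := by
  rcases le_or_gt δ 0 with hle | hpos
  · exact hle.trans (setDist_nonneg _ _)
  have hfin := setEdist_ne_top_of_setDist_pos (hpos.trans_le hδ)
  have hF : F ⊆ (thickening δ E)ᶜ := fun b hb => by
    rw [mem_compl_iff, mem_thickening_iff_infEDist_lt, not_lt]
    exact ((ENNReal.ofReal_le_iff_le_toReal hfin).2 hδ).trans (setEdist_le_infEDist_of_mem hb)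
  refine le_setDist_of_le_setEdist (le_iInf₂ fun a ha => le_infEDist.2 fun y hy => ?_)
    (ne_top_of_le_ne_top hfin (iInf₂_mono fun a _ => infEDist_anti hF))
  rw [mem_compl_iff, mem_thickening_iff_infEDist_lt, not_lt] at hy
  exact hy.trans ((infEDist_le_edist_of_mem ha).trans_eq (edist_comm y a))

end SetDist

theorem Real.exp_neg_rpow_div_le {β : ℝ} (hβ : 0 ≤ β) {u v p q : ℝ} (hu : 0 ≤ u)
    (huv : u ≤ v) (hp : 0 < p) (hpq : p ≤ q) :
    Real.exp (-(v ^ 2 / p) ^ β) ≤ Real.exp (-(u ^ 2 / q) ^ β) := by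
  have hq := hp.trans_le hpq
  gcongr

theorem MeasureTheory.Lp.exists_add_ae_eq_indicator {α E : Type*} [MeasurableSpace α]
    {μ : Measure α} [NormedAddCommGroup E] {p : ℝ≥0∞} (g : Lp E p μ) {s : Set α}
    (hs : MeasurableSet s) :
    ∃ g₁ g₂ : Lp E p μ, g = g₁ + g₂ ∧ g₁ =ᵐ[μ] s.indicator g ∧ g₂ =ᵐ[μ] sᶜ.indicator g := by
  have h₁ := ((Lp.memLp g).indicator hs).coeFn_toLp
  have h₂ := ((Lp.memLp g).indicator hs.compl).coeFn_toLp
  refine ⟨_, _, Lp.ext ?_, h₁, h₂⟩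
  filter_upwards [Lp.coeFn_add (((Lp.memLp g).indicator hs).toLp _)
    (((Lp.memLp g).indicator hs.compl).toLp _), h₁, h₂] with x hadd h₁x h₂x
  rw [hadd, Pi.add_apply, h₁x, h₂x, indicator_self_add_compl_apply]

section L2Norm

variable {n : ℕ}

theorem l2NormOn_eq_eLpNorm (F : Set (EuclideanSpace ℝ (Fin n))) (f : L²(n)) :
    l2NormOn n F f = eLpNorm f 2 (volume.restrict F) := by
  rw [eLpNorm_eq_lintegral_rpow_enorm_toReal two_ne_zero ENNReal.ofNat_ne_top, l2NormOn]
  congr 1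
  refine lintegral_congr fun x => ?_
  rw [← ENNReal.rpow_natCast]
  norm_num
  rfl

theorem l2NormOn_add_le (F : Set (EuclideanSpace ℝ (Fin n))) (f g : L²(n)) :
    l2NormOn n F (f + g) ≤ l2NormOn n F f + l2NormOn n F g := by
  simp only [l2NormOn_eq_eLpNorm]
  calc eLpNorm (⇑(f + g)) 2 (volume.restrict F)
      = eLpNorm (⇑f + ⇑g) 2 (volume.restrict F) :=
        eLpNorm_congr_ae (ae_restrict_of_ae (Lp.coeFn_add f g))
    _ ≤ _ := eLpNorm_add_le (Lp.aestronglyMeasurable f).restrict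
        (Lp.aestronglyMeasurable g).restrict one_le_two

theorem l2NormOn_le_of_ae_eq_indicator (D : Set (EuclideanSpace ℝ (Fin n)))
    {A B : Set (EuclideanSpace ℝ (Fin n))} (hA : MeasurableSet A) (hAB : A ⊆ B) {g u : L²(n)}
    (hu : u =ᵐ[volume] A.indicator g) :
    l2NormOn n D u ≤ l2NormOn n B g := by
  rw [l2NormOn_eq_eLpNorm, l2NormOn_eq_eLpNorm]
  calc eLpNorm u 2 (volume.restrict D) ≤ eLpNorm u 2 volume :=
        eLpNorm_mono_measure _ Measure.restrict_le_self
    _ = eLpNorm g 2 (volume.restrict A) := by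
        rw [eLpNorm_congr_ae hu, eLpNorm_indicator_eq_eLpNorm_restrict hA]
    _ ≤ _ := eLpNorm_mono_measure _ (Measure.restrict_mono hAB le_rfl)

end L2Norm

namespace Gaffney

variable {n : ℕ}

theorem ae_eq_zero_off_univ (f : L²(n)) : ∀ᵐ x, x ∉ (univ : Set _) → f x = 0 :=
  ae_of_all _ fun x hx => absurd (mem_univ x) hx

theorem l2NormOn_le {S : ℝ → L²(n) →L[ℂ] L²(n)} {β c C : ℝ} (hS : Gaffney n S β c C)
    (hc : 0 ≤ c) (hC : 0 ≤ C) {E F : Set (EuclideanSpace ℝ (Fin n))} (hE : IsClosed E)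
    (hF : IsClosed F) {t : ℝ} (ht : 0 < t) {f : L²(n)} (hf : ∀ᵐ x, x ∉ E → f x = 0) :
    l2NormOn n F (S t f) ≤ ENNReal.ofReal C * l2NormOn n E f := by
  refine (hS E F hE hF t ht f hf).trans (mul_le_mul_left (ENNReal.ofReal_le_ofReal ?_) _)
  exact mul_le_of_le_one_right hC (Real.exp_le_one_iff.2 (neg_nonpos.2 (by positivity)))

theorem l2NormOn_comp_le {S T : ℝ → L²(n) →L[ℂ] L²(n)} {β₁ c₁ C₁ β₂ c₂ C₂ : ℝ}
    (hS : Gaffney n S β₁ c₁ C₁) (hT : Gaffney n T β₂ c₂ C₂) (hc₁ : 0 ≤ c₁) (hC₁ : 0 ≤ C₁)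
    (hc₂ : 0 ≤ c₂) (hC₂ : 0 ≤ C₂) {E F G H : Set (EuclideanSpace ℝ (Fin n))}
    (hE : IsClosed E) (hF : IsClosed F) (hG : IsClosed G) (hH : IsClosed H) (hGH : Gᶜ ⊆ H)
    {s t : ℝ} (hs : 0 < s) (ht : 0 < t) {f : L²(n)} (hf : ∀ᵐ x, x ∉ E → f x = 0) :
    l2NormOn n F (S s (T t f)) ≤
      (ENNReal.ofReal (C₁ * Real.exp (-(setDist G F ^ 2 / (c₁ * s)) ^ β₁)) * ENNReal.ofReal C₂ +
        ENNReal.ofReal C₁ * ENNReal.ofReal (C₂ * Real.exp (-(setDist E H ^ 2 / (c₂ * t)) ^ β₂))) *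
        l2NormOn n E f := by
  obtain ⟨g₁, g₂, hsplit, hg₁, hg₂⟩ := Lp.exists_add_ae_eq_indicator (T t f) hG.measurableSet
  have hg₁G : ∀ᵐ x, x ∉ G → g₁ x = 0 := by
    filter_upwards [hg₁] with x hx hxG
    rw [hx, indicator_of_notMem hxG]
  have near : l2NormOn n F (S s g₁) ≤
      ENNReal.ofReal (C₁ * Real.exp (-(setDist G F ^ 2 / (c₁ * s)) ^ β₁)) *
        (ENNReal.ofReal C₂ * l2NormOn n E f) := by
    refine (hS G F hG hF s hs g₁ hg₁G).trans (mul_le_mul_right ?_ _)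
    calc l2NormOn n G g₁ ≤ l2NormOn n univ (T t f) :=
          l2NormOn_le_of_ae_eq_indicator G hG.measurableSet (subset_univ G) hg₁
      _ ≤ _ := hT.l2NormOn_le hc₂ hC₂ hE isClosed_univ ht hf
  have far : l2NormOn n F (S s g₂) ≤ ENNReal.ofReal C₁ *
      (ENNReal.ofReal (C₂ * Real.exp (-(setDist E H ^ 2 / (c₂ * t)) ^ β₂)) * l2NormOn n E f) :=
    calc l2NormOn n F (S s g₂) ≤ ENNReal.ofReal C₁ * l2NormOn n univ g₂ :=
          hS.l2NormOn_le hc₁ hC₁ isClosed_univ hF hs (ae_eq_zero_off_univ g₂)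
      _ ≤ ENNReal.ofReal C₁ * l2NormOn n H (T t f) := by
          gcongr
          exact l2NormOn_le_of_ae_eq_indicator univ hG.measurableSet.compl hGH hg₂
      _ ≤ _ := by
          gcongr
          exact hT E H hE hH t ht f hf
  calc l2NormOn n F (S s (T t f)) ≤ l2NormOn n F (S s g₁) + l2NormOn n F (S s g₂) := by
        rw [hsplit, map_add]
        exact l2NormOn_add_le F _ _
    _ ≤ _ := by
        rw [add_mul, mul_assoc, mul_assoc]
        exact add_le_add near far

end Gaffney

theorem stmt4 (n : ℕ) (β c C : ℝ) (hβ : 0 < β) (hc : 0 < c) (hC : 0 < C)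
    (S T : ℝ → Lp ℂ 2 (volume : Measure (EuclideanSpace ℝ (Fin n))) →L[ℂ]
      Lp ℂ 2 (volume : Measure (EuclideanSpace ℝ (Fin n))))
    (hS : Gaffney n S β c C) (hT : Gaffney n T β c C) :
    ∃ c' C' : ℝ, 0 < c' ∧ 0 < C' ∧
      ∀ E F : Set (EuclideanSpace ℝ (Fin n)), IsClosed E → IsClosed F →
        ∀ s t : ℝ, 0 < s → 0 < t →
          ∀ f : Lp ℂ 2 (volume : Measure (EuclideanSpace ℝ (Fin n))),
            (∀ᵐ x, x ∉ E → f x = 0) →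
            l2NormOn n F (S s (T t f)) ≤
              ENNReal.ofReal
                  (C' * Real.exp (-(setDist E F ^ 2 / (c' * max s t)) ^ β)) *
                l2NormOn n E f := by
  refine ⟨4 * c, 2 * C ^ 2, by positivity, by positivity, ?_⟩
  intro E F hE hF s t hs ht f hf
  set δ := setDist E F / 2 with hδ_def
  have hδ : 0 ≤ δ := div_nonneg (setDist_nonneg E F) zero_le_two
  have decay {r σ : ℝ} (hr : δ ≤ r) (hσ : 0 < σ) (hσst : σ ≤ max s t) :
      Real.exp (-(r ^ 2 / (c * σ)) ^ β) ≤
        Real.exp (-(setDist E F ^ 2 / (4 * c * max s t)) ^ β) := by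
    have hδsq : setDist E F ^ 2 / (4 * c * max s t) = δ ^ 2 / (c * max s t) := by
      rw [hδ_def]
      ring
    rw [hδsq]
    exact Real.exp_neg_rpow_div_le hβ.le hδ hr (by positivity) (by gcongr)
  have near := decay (r := setDist (cthickening δ E) F)
    (by linarith [setDist_sub_le_setDist_cthickening E F hδ]) hs (le_max_left s t)
  have far := decay (le_setDist_compl_thickening (by linarith [setDist_nonneg E F])) ht
    (le_max_right s t)
  refine (hS.l2NormOn_comp_le hT hc.le hC.le hc.le hC.le hE hF isClosed_cthickening
    isOpen_thickening.isClosed_compl (compl_subset_compl.2 (thickening_subset_cthickening δ E))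
    hs ht hf).trans (mul_le_mul_left ?_ _)
  rw [← ENNReal.ofReal_mul (by positivity), ← ENNReal.ofReal_mul hC.le,
    ← ENNReal.ofReal_add (by positivity) (by positivity)]
  refine ENNReal.ofReal_le_ofReal ?_
  nlinarith [mul_le_mul_of_nonneg_left near hC.le, mul_le_mul_of_nonneg_left far hC.le]
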